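/- Suppose P(μ ≠ 0) > 0. Then the function R(τ; G) = E_μ[∫_{−|μ|}^{|μ|} |w|·φ(w−τ) dw] / ∫_{−∞}^{0} |w|·φ(w−τ) dw is strictly increasing in τ on [0, ∞); that is, its derivative with respect to τ is strictly positive for every τ ≥ 0. -/

import Mathlib

open MeasureTheory

/-- Standard Gaussian density `φ(z) = e^{-z²/2}/√(2π)`. -/
noncomputable def gaussPDF (z : ℝ) : ℝ := Real.exp (-z ^ 2 / 2) / Real.sqrt (2 * Real.pi)

/-- Soft-thresholding function `η(x; τ) = sign(x)·max(|x| − τ, 0)`. -/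
noncomputable def softThr (x τ : ℝ) : ℝ := Real.sign x * max (|x| - τ) 0

/-- Soft-thresholding risk `r(τ; G) = E_{μ∼G, Z∼N(0,1)}[(η(μ + Z; τ) − μ)²]`. -/
noncomputable def stRisk (G : Measure ℝ) (τ : ℝ) : ℝ :=
  ∫ m, (∫ z, (softThr (m + z) τ - m) ^ 2 * gaussPDF z) ∂G

/-- The ratio `R(τ; G) = E_μ[∫_{−|μ|}^{|μ|} |w|·φ(w−τ) dw] / ∫_{−∞}^{0} |w|·φ(w−τ) dw`. -/
noncomputable def Rratio (G : Measure ℝ) (τ : ℝ) : ℝ :=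
  (∫ m, (∫ w in (-|m|)..(|m|), |w| * gaussPDF (w - τ)) ∂G) /
    ∫ w in Set.Iio (0 : ℝ), |w| * gaussPDF (w - τ)

/-!
Write `N(τ)` for the numerator of `R` and `L(τ)` for its denominator. Reflecting `w ↦ -w`,
`L(τ) = E (Z - τ)⁺ = φ(τ) - τ Q(τ)` is the normal loss function (`normalLoss`), where
`Q = gaussTail` is the upper Gaussian tail, so `L' = -Q`. Differentiating under both integrals,
`R'` has the sign of `L N' + Q N = E ∫_{-|μ|}^{|μ|} |w| k_τ(w) dw` with
`k_τ(w) = (Q + L (w - τ)) φ(w - τ)` (`derivKernel`). For `w > 0` and `τ ≥ 0`,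
`k_τ(w) + k_τ(-w) = (Q + L (w - τ)) φ(w - τ) + (Q - L (w + τ)) φ(w + τ) > 0`:
since `φ(w + τ) ≤ φ(w - τ)`, it suffices that the first coefficient and the sum `2 (Q - τ L)` of
both coefficients are positive, and `Q - τ L = ∫_τ^∞ (x - τ)² φ(x) dx > 0` is a Mills-ratio
inequality. Hence the inner integral is positive whenever `μ ≠ 0`.
-/

open Real Set Filter Topology intervalIntegral

lemma gaussPDF_pos (x : ℝ) : 0 < gaussPDF x := by
  unfold gaussPDF; positivity

lemma gaussPDF_neg (x : ℝ) : gaussPDF (-x) = gaussPDF x := by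
  simp [gaussPDF]

@[fun_prop]
lemma continuous_gaussPDF : Continuous gaussPDF := by
  unfold gaussPDF; fun_prop

lemma hasDerivAt_gaussPDF (x : ℝ) : HasDerivAt gaussPDF (-x * gaussPDF x) x := by
  have h : HasDerivAt (fun x : ℝ => -x ^ 2 / 2) (-x) x := by
    simpa [neg_div] using ((hasDerivAt_pow 2 x).neg.div_const 2)
  exact (h.exp.div_const _).congr_deriv (by unfold gaussPDF; ring)

lemma gaussPDF_le_exp (x : ℝ) : gaussPDF x ≤ exp (-x ^ 2 / 2) :=
  div_le_self (exp_pos _).le (one_le_sqrt.2 (by linarith [pi_gt_three]))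

lemma abs_gaussPDF_le_one (x : ℝ) : |gaussPDF x| ≤ 1 := by
  rw [abs_of_pos (gaussPDF_pos x)]
  exact (gaussPDF_le_exp x).trans (exp_le_one_iff.2 (by nlinarith [sq_nonneg x]))

lemma abs_mul_gaussPDF_le_one (x : ℝ) : |x * gaussPDF x| ≤ 1 := by
  have hx : |x| ≤ exp (x ^ 2 / 2) := by
    nlinarith [add_one_le_exp (x ^ 2 / 2), sq_abs x, sq_nonneg (|x| - 1)]
  rw [abs_mul, abs_of_pos (gaussPDF_pos x)]
  calc |x| * gaussPDF x ≤ exp (x ^ 2 / 2) * exp (-x ^ 2 / 2) :=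
        mul_le_mul hx (gaussPDF_le_exp x) (gaussPDF_pos x).le (exp_pos _).le
    _ = 1 := by rw [← exp_add]; ring_nf; exact exp_zero

lemma integrable_pow_mul_gaussPDF (n : ℕ) : Integrable fun x => x ^ n * gaussPDF x := by
  refine ((integrable_rpow_mul_exp_neg_mul_sq (b := 1 / 2) (by norm_num)
    (s := n) (by linarith [n.cast_nonneg (α := ℝ)])).div_const (√(2 * π))).congr
    (ae_of_all _ fun x => ?_)
  simp only [gaussPDF, rpow_natCast]
  ring_nf

lemma integrable_gaussPDF : Integrable gaussPDF := by
  simpa using integrable_pow_mul_gaussPDF 0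

lemma integrable_mul_gaussPDF : Integrable fun x => x * gaussPDF x := by
  simpa using integrable_pow_mul_gaussPDF 1

lemma tendsto_gaussPDF_atTop : Tendsto gaussPDF atTop (𝓝 0) :=
  tendsto_zero_of_hasDerivAt_of_integrableOn_Ioi (a := 0) (fun x _ => hasDerivAt_gaussPDF x)
    (integrable_mul_gaussPDF.neg.integrableOn.congr_fun (fun x _ => by simp [neg_mul])
      measurableSet_Ioi) integrable_gaussPDF.integrableOn

lemma tendsto_mul_gaussPDF_atTop : Tendsto (fun x => x * gaussPDF x) atTop (𝓝 0) := by
  refine tendsto_zero_of_hasDerivAt_of_integrableOn_Ioi (a := 0)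
    (fun x _ => ((hasDerivAt_id x).mul (hasDerivAt_gaussPDF x)))
    ?_ integrable_mul_gaussPDF.integrableOn
  refine (integrable_gaussPDF.sub (integrable_pow_mul_gaussPDF 2)).integrableOn.congr_fun
    (fun x _ => ?_) measurableSet_Ioi
  simp only [Pi.sub_apply, id]; ring

lemma setIntegral_Ioi_pos {f : ℝ → ℝ} {a : ℝ} (hf : IntegrableOn f (Ioi a))
    (hpos : ∀ x ∈ Ioi a, 0 < f x) : 0 < ∫ x in Ioi a, f x := by
  rw [setIntegral_pos_iff_support_of_nonneg_ae
    (ae_restrict_of_forall_mem measurableSet_Ioi fun x hx => (hpos x hx).le) hf,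
    inter_eq_right.2 fun x hx => Function.mem_support.2 (hpos x hx).ne']
  simp

noncomputable def gaussTail (τ : ℝ) : ℝ := ∫ x in Ioi τ, gaussPDF x

lemma gaussTail_eq_sub (τ : ℝ) : gaussTail τ = gaussTail 0 - ∫ x in 0..τ, gaussPDF x := by
  rw [← integral_Ioi_sub_Ioi' integrable_gaussPDF.integrableOn integrable_gaussPDF.integrableOn,
    gaussTail, gaussTail, sub_sub_cancel]

lemma hasDerivAt_gaussTail (τ : ℝ) : HasDerivAt gaussTail (-gaussPDF τ) τ := by
  rw [funext gaussTail_eq_sub]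
  exact ((continuous_gaussPDF.integral_hasStrictDerivAt 0 τ).hasDerivAt).const_sub _

lemma tendsto_gaussTail_atTop : Tendsto gaussTail atTop (𝓝 0) := by
  have h := intervalIntegral_tendsto_integral_Ioi 0 integrable_gaussPDF.integrableOn tendsto_id
  have h' := (tendsto_const_nhds (x := gaussTail 0)).sub h
  rw [← gaussTail, sub_self] at h'
  exact h'.congr fun x => (gaussTail_eq_sub x).symm

noncomputable def normalLoss (τ : ℝ) : ℝ := gaussPDF τ - τ * gaussTail τ

lemma hasDerivAt_normalLoss (τ : ℝ) : HasDerivAt normalLoss (-gaussTail τ) τ :=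
  ((hasDerivAt_gaussPDF τ).sub ((hasDerivAt_id τ).mul (hasDerivAt_gaussTail τ))).congr_deriv
    (by simp only [id]; ring)

lemma integrable_mul_gaussPDF_add (τ : ℝ) : Integrable fun x => x * gaussPDF (x + τ) :=
  ((integrable_mul_gaussPDF.comp_add_right τ).sub
    ((integrable_gaussPDF.comp_add_right τ).const_mul τ)).congr
    (ae_of_all _ fun x => by simp only [Pi.sub_apply]; ring)

lemma integral_Ioi_mul_gaussPDF_add (τ : ℝ) :
    ∫ x in Ioi 0, x * gaussPDF (x + τ) = normalLoss τ := by
  have hderiv (x : ℝ) : HasDerivAt (fun x => τ * gaussTail (x + τ) - gaussPDF (x + τ))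
      (x * gaussPDF (x + τ)) x :=
    ((((hasDerivAt_gaussTail _).comp_add_const x τ).const_mul τ).sub
      ((hasDerivAt_gaussPDF _).comp_add_const x τ)).congr_deriv (by ring)
  have hlim : Tendsto (fun x => τ * gaussTail (x + τ) - gaussPDF (x + τ)) atTop (𝓝 0) := by
    have hshift := tendsto_atTop_add_const_right atTop τ tendsto_id
    simpa using ((tendsto_gaussTail_atTop.comp hshift).const_mul τ).sub
      (tendsto_gaussPDF_atTop.comp hshift)
  rw [integral_Ioi_of_hasDerivAt_of_tendsto' (fun x _ => hderiv x)
    (integrable_mul_gaussPDF_add τ).integrableOn hlim, normalLoss]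
  simp only [zero_add]; ring

lemma integral_Iio_abs_mul_gaussPDF_sub (τ : ℝ) :
    ∫ w in Iio 0, |w| * gaussPDF (w - τ) = normalLoss τ := by
  rw [← integral_Iic_eq_integral_Iio, ← neg_zero, ← integral_comp_neg_Ioi,
    ← integral_Ioi_mul_gaussPDF_add]
  refine setIntegral_congr_fun measurableSet_Ioi fun x hx => ?_
  rw [abs_neg, abs_of_pos hx, ← gaussPDF_neg]
  ring_nf

lemma normalLoss_pos (τ : ℝ) : 0 < normalLoss τ := by
  rw [← integral_Ioi_mul_gaussPDF_add]
  exact setIntegral_Ioi_pos (integrable_mul_gaussPDF_add τ).integrableOn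
    fun x hx => mul_pos hx (gaussPDF_pos _)

lemma integrable_sq_sub_mul_gaussPDF (τ : ℝ) : Integrable fun x => (x - τ) ^ 2 * gaussPDF x :=
  (((integrable_pow_mul_gaussPDF 2).sub (integrable_mul_gaussPDF.const_mul (2 * τ))).add
    (integrable_gaussPDF.const_mul (τ ^ 2))).congr
    (ae_of_all _ fun x => by simp only [Pi.add_apply, Pi.sub_apply]; ring)

lemma gaussTail_sub_mul_normalLoss (τ : ℝ) :
    gaussTail τ - τ * normalLoss τ = ∫ x in Ioi τ, (x - τ) ^ 2 * gaussPDF x := by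
  have hderiv (x : ℝ) : HasDerivAt (fun x => -(x - 2 * τ) * gaussPDF x - (1 + τ ^ 2) * gaussTail x)
      ((x - τ) ^ 2 * gaussPDF x) x :=
    ((((hasDerivAt_id x).sub_const (2 * τ)).neg.mul (hasDerivAt_gaussPDF x)).sub
      ((hasDerivAt_gaussTail x).const_mul _)).congr_deriv (by simp only [id, Pi.neg_apply]; ring)
  have hlim : Tendsto (fun x => -(x - 2 * τ) * gaussPDF x - (1 + τ ^ 2) * gaussTail x) atTop
      (𝓝 0) := by
    have h := ((tendsto_mul_gaussPDF_atTop.sub (tendsto_gaussPDF_atTop.const_mul (2 * τ))).neg).sub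
      (tendsto_gaussTail_atTop.const_mul (1 + τ ^ 2))
    simp only [sub_zero, mul_zero, neg_zero] at h
    exact h.congr fun x => by ring
  rw [integral_Ioi_of_hasDerivAt_of_tendsto' (fun x _ => hderiv x)
    (integrable_sq_sub_mul_gaussPDF τ).integrableOn hlim, normalLoss]
  ring

lemma mul_normalLoss_lt_gaussTail (τ : ℝ) : τ * normalLoss τ < gaussTail τ := by
  rw [← sub_pos, gaussTail_sub_mul_normalLoss]
  exact setIntegral_Ioi_pos (integrable_sq_sub_mul_gaussPDF τ).integrableOn
    fun x hx => mul_pos (pow_pos (sub_pos.2 hx) 2) (gaussPDF_pos x)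

lemma hasDerivAt_intervalIntegral_mul_gaussPDF_sub {g : ℝ → ℝ} (hg : Continuous g) (a b τ : ℝ) :
    HasDerivAt (fun σ => ∫ w in a..b, g w * gaussPDF (w - σ))
      (∫ w in a..b, g w * ((w - τ) * gaussPDF (w - τ))) τ := by
  have hderiv (w σ : ℝ) : HasDerivAt (fun σ => g w * gaussPDF (w - σ))
      (g w * ((w - σ) * gaussPDF (w - σ))) σ :=
    (((hasDerivAt_gaussPDF _).comp_const_sub w σ).const_mul (g w)).congr_deriv (by ring)
  have hbound (w σ : ℝ) : ‖g w * ((w - σ) * gaussPDF (w - σ))‖ ≤ |g w| := by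
    rw [norm_mul, Real.norm_eq_abs, Real.norm_eq_abs]
    exact mul_le_of_le_one_right (abs_nonneg _) (abs_mul_gaussPDF_le_one _)
  exact (hasDerivAt_integral_of_dominated_loc_of_deriv_le univ_mem
    (Eventually.of_forall fun σ => (by fun_prop : Continuous fun w => g w * gaussPDF (w - σ))
      |>.aestronglyMeasurable)
    ((by fun_prop : Continuous fun w => g w * gaussPDF (w - τ)).intervalIntegrable _ _)
    (by fun_prop : Continuous fun w => g w * ((w - τ) * gaussPDF (w - τ))).aestronglyMeasurable
    (ae_of_all _ fun w _ σ _ => hbound w σ) (hg.abs.intervalIntegrable _ _)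
    (ae_of_all _ fun w _ σ _ => hderiv w σ)).2

lemma abs_intervalIntegral_abs_mul_le {f : ℝ → ℝ} {C : ℝ} (hf : ∀ x, |f x| ≤ C) (m : ℝ) :
    |∫ w in -|m|..|m|, |w| * f w| ≤ 2 * C * m ^ 2 := by
  have hC : 0 ≤ C := (abs_nonneg _).trans (hf 0)
  have h := norm_integral_le_of_norm_le_const (C := |m| * C) (f := fun w => |w| * f w)
    (a := -|m|) (b := |m|) fun w hw => by
      rw [uIoc_of_le (by simp)] at hw
      rw [Real.norm_eq_abs, abs_mul, abs_abs]
      exact mul_le_mul (abs_le.2 ⟨hw.1.le, hw.2⟩) (hf w) (abs_nonneg _) (abs_nonneg _)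
  rw [Real.norm_eq_abs, sub_neg_eq_add, ← two_mul,
    abs_of_nonneg (by positivity : (0 : ℝ) ≤ 2 * |m|)] at h
  nlinarith [sq_abs m]

lemma continuous_intervalIntegral_neg_abs {f : ℝ → ℝ} (hf : Continuous f) :
    Continuous fun m => ∫ w in -|m|..|m|, f w := by
  have h := continuous_primitive (μ := volume) (fun a b => hf.intervalIntegrable a b) 0
  refine ((h.comp continuous_abs).sub (h.comp continuous_abs.neg)).congr fun m => ?_
  exact integral_interval_sub_left (hf.intervalIntegrable _ _) (hf.intervalIntegrable _ _)

lemma integrable_intervalIntegral_abs_mul {G : Measure ℝ} (hG : Integrable (fun m => m ^ 2) G)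
    {f : ℝ → ℝ} {C : ℝ} (hf : Continuous f) (hfC : ∀ x, |f x| ≤ C) :
    Integrable (fun m => ∫ w in -|m|..|m|, |w| * f w) G :=
  (hG.const_mul (2 * C)).mono'
    (continuous_intervalIntegral_neg_abs (by fun_prop)).aestronglyMeasurable
    (ae_of_all _ fun m => abs_intervalIntegral_abs_mul_le hfC m)

lemma hasDerivAt_integral_intervalIntegral_abs_mul_gaussPDF_sub {G : Measure ℝ}
    (hG : Integrable (fun m => m ^ 2) G) (τ : ℝ) :
    HasDerivAt (fun σ => ∫ m, (∫ w in -|m|..|m|, |w| * gaussPDF (w - σ)) ∂G)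
      (∫ m, (∫ w in -|m|..|m|, |w| * ((w - τ) * gaussPDF (w - τ))) ∂G) τ := by
  refine (hasDerivAt_integral_of_dominated_loc_of_deriv_le univ_mem
    (Eventually.of_forall fun σ => (continuous_intervalIntegral_neg_abs (by fun_prop))
      |>.aestronglyMeasurable)
    (integrable_intervalIntegral_abs_mul hG (by fun_prop) fun x => abs_gaussPDF_le_one _)
    (continuous_intervalIntegral_neg_abs (by fun_prop)).aestronglyMeasurable
    (ae_of_all _ fun m σ _ => ?_) (hG.const_mul (2 * 1))
    (ae_of_all _ fun m σ _ => hasDerivAt_intervalIntegral_mul_gaussPDF_sub continuous_abs _ _ σ)).2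
  exact abs_intervalIntegral_abs_mul_le (fun x => abs_mul_gaussPDF_le_one (x - σ)) m

lemma intervalIntegral_abs_mul_pos {g : ℝ → ℝ} (hg : Continuous g)
    (hsymm : ∀ w, 0 < w → 0 < g w + g (-w)) {a : ℝ} (ha : 0 < a) :
    0 < ∫ w in -a..a, |w| * g w := by
  have hc : Continuous fun w => |w| * g w := by fun_prop
  have hfold : ∫ w in -a..a, |w| * g w = ∫ w in 0..a, |w| * (g w + g (-w)) := by
    rw [← integral_add_adjacent_intervals (b := 0) (hc.intervalIntegrable _ _)
      (hc.intervalIntegrable _ _), ← neg_zero, ← integral_comp_neg (fun w => |w| * g w), neg_zero,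
      ← integral_add ((by fun_prop : Continuous fun w => |-w| * g (-w)).intervalIntegrable _ _)
        (hc.intervalIntegrable _ _)]
    congr 1; ext w; rw [abs_neg]; ring
  rw [hfold]
  exact intervalIntegral_pos_of_pos_on ((by fun_prop : Continuous _).intervalIntegrable _ _)
    (fun w hw => mul_pos (abs_pos.2 hw.1.ne') (hsymm w hw.1)) ha

lemma gaussPDF_add_le_gaussPDF_sub {a b : ℝ} (hab : 0 ≤ a * b) :
    gaussPDF (a + b) ≤ gaussPDF (a - b) :=
  div_le_div_of_nonneg_right (exp_le_exp.2 (by nlinarith)) (sqrt_nonneg _)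

noncomputable def derivKernel (τ w : ℝ) : ℝ :=
  (gaussTail τ + normalLoss τ * (w - τ)) * gaussPDF (w - τ)

@[fun_prop]
lemma continuous_derivKernel (τ : ℝ) : Continuous (derivKernel τ) := by
  unfold derivKernel; fun_prop

lemma derivKernel_add_neg_pos {τ w : ℝ} (hτ : 0 ≤ τ) (hw : 0 < w) :
    0 < derivKernel τ w + derivKernel τ (-w) := by
  have hmills := mul_normalLoss_lt_gaussTail τ
  have hL := normalLoss_pos τ
  have hφ := gaussPDF_add_le_gaussPDF_sub (mul_nonneg hw.le hτ)
  have hφpos := gaussPDF_pos (w + τ)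
  have hfirst : 0 < gaussTail τ + normalLoss τ * (w - τ) := by nlinarith
  rw [derivKernel, derivKernel, show -w - τ = -(w + τ) by ring, gaussPDF_neg]
  nlinarith [mul_le_mul_of_nonneg_left hφ hfirst.le]

lemma intervalIntegral_abs_mul_derivKernel (τ a : ℝ) :
    ∫ w in -a..a, |w| * derivKernel τ w =
      normalLoss τ * (∫ w in -a..a, |w| * ((w - τ) * gaussPDF (w - τ))) +
        gaussTail τ * ∫ w in -a..a, |w| * gaussPDF (w - τ) := by
  rw [← intervalIntegral.integral_const_mul, ← intervalIntegral.integral_const_mul,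
    ← integral_add ((by fun_prop : Continuous _).intervalIntegrable _ _)
      ((by fun_prop : Continuous _).intervalIntegrable _ _)]
  congr 1; ext w; rw [derivKernel]; ring

lemma integral_intervalIntegral_abs_mul_derivKernel {G : Measure ℝ}
    (hG : Integrable (fun m => m ^ 2) G) (τ : ℝ) :
    ∫ m, (∫ w in -|m|..|m|, |w| * derivKernel τ w) ∂G =
      normalLoss τ * (∫ m, (∫ w in -|m|..|m|, |w| * ((w - τ) * gaussPDF (w - τ))) ∂G) +
        gaussTail τ * ∫ m, (∫ w in -|m|..|m|, |w| * gaussPDF (w - τ)) ∂G := by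
  rw [← MeasureTheory.integral_const_mul, ← MeasureTheory.integral_const_mul,
    ← integral_add
      ((integrable_intervalIntegral_abs_mul hG (by fun_prop)
        fun x => abs_mul_gaussPDF_le_one (x - τ)).const_mul _)
      ((integrable_intervalIntegral_abs_mul hG (by fun_prop)
        fun x => abs_gaussPDF_le_one (x - τ)).const_mul _)]
  simp_rw [intervalIntegral_abs_mul_derivKernel]

lemma integral_intervalIntegral_abs_mul_derivKernel_pos {G : Measure ℝ}
    (hG : Integrable (fun m => m ^ 2) G) (hne : 0 < G {m : ℝ | m ≠ 0}) {τ : ℝ} (hτ : 0 ≤ τ) :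
    0 < ∫ m, (∫ w in -|m|..|m|, |w| * derivKernel τ w) ∂G := by
  have hpos (m : ℝ) (hm : m ≠ 0) : 0 < ∫ w in -|m|..|m|, |w| * derivKernel τ w :=
    intervalIntegral_abs_mul_pos (continuous_derivKernel τ)
      (fun w hw => derivKernel_add_neg_pos hτ hw) (abs_pos.2 hm)
  have hnonneg (m : ℝ) : 0 ≤ ∫ w in -|m|..|m|, |w| * derivKernel τ w := by
    rcases eq_or_ne m 0 with rfl | hm
    · simp
    · exact (hpos m hm).le
  have hC (x : ℝ) : |derivKernel τ x| ≤ |gaussTail τ| + |normalLoss τ| := by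
    rw [derivKernel, add_mul, mul_assoc]
    refine (abs_add_le _ _).trans (add_le_add ?_ ?_) <;> rw [abs_mul]
    · exact mul_le_of_le_one_right (abs_nonneg _) (abs_gaussPDF_le_one _)
    · exact mul_le_of_le_one_right (abs_nonneg _) (abs_mul_gaussPDF_le_one _)
  exact (integral_pos_iff_support_of_nonneg hnonneg
    (integrable_intervalIntegral_abs_mul hG (continuous_derivKernel τ) hC)).2
    (hne.trans_le (measure_mono fun m hm => (hpos m hm).ne'))

lemma strictMonoOn_Ici_and_deriv_pos {f f' : ℝ → ℝ} {a : ℝ} (hf : ∀ x, HasDerivAt f (f' x) x)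
    (hpos : ∀ x, a ≤ x → 0 < f' x) :
    StrictMonoOn f (Ici a) ∧ ∀ x, a ≤ x → 0 < deriv f x := by
  have hderiv (x : ℝ) (hx : a ≤ x) : 0 < deriv f x := (hf x).deriv ▸ hpos x hx
  refine ⟨strictMonoOn_of_deriv_pos (convex_Ici a)
    (fun x _ => (hf x).continuousAt.continuousWithinAt) fun x hx => ?_, hderiv⟩
  rw [interior_Ici] at hx
  exact hderiv x (le_of_lt hx)

theorem Rratio_strictMono_general (G : Measure ℝ)
    (hG : Integrable (fun m => m ^ 2) G) (hne : 0 < G {m : ℝ | m ≠ 0}) :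
    StrictMonoOn (Rratio G) (Set.Ici 0) ∧
      ∀ τ : ℝ, 0 ≤ τ → 0 < deriv (Rratio G) τ := by
  set N := fun τ => ∫ m, (∫ w in -|m|..|m|, |w| * gaussPDF (w - τ)) ∂G
  set N' := fun τ => ∫ m, (∫ w in -|m|..|m|, |w| * ((w - τ) * gaussPDF (w - τ))) ∂G
  have hR : Rratio G = fun τ => N τ / normalLoss τ := by
    ext τ; rw [Rratio, integral_Iio_abs_mul_gaussPDF_sub]
  refine strictMonoOn_Ici_and_deriv_pos
    (f' := fun τ => (N' τ * normalLoss τ - N τ * -gaussTail τ) / normalLoss τ ^ 2)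
    (fun τ => ?_) fun τ hτ => ?_
  · rw [hR]
    exact (hasDerivAt_integral_intervalIntegral_abs_mul_gaussPDF_sub hG τ).div
      (hasDerivAt_normalLoss τ) (normalLoss_pos τ).ne'
  · have hnum := integral_intervalIntegral_abs_mul_derivKernel_pos hG hne hτ
    rw [integral_intervalIntegral_abs_mul_derivKernel hG] at hnum
    exact div_pos (by linarith) (pow_pos (normalLoss_pos τ) 2)

/-- if `P(μ ≠ 0) > 0`, then `R(·; G)` is strictly increasing on `[0, ∞)`,
with strictly positive derivative at every `τ ≥ 0`. -/
theorem Rratio_strictMono (G : Measure ℝ) [IsProbabilityMeasure G]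
    (hG : Integrable (fun m => m ^ 2) G) (hne : 0 < G {m : ℝ | m ≠ 0}) :
    StrictMonoOn (Rratio G) (Set.Ici 0) ∧
      ∀ τ : ℝ, 0 ≤ τ → 0 < deriv (Rratio G) τ :=
  Rratio_strictMono_general G hG hne
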